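/- arXiv:2102.04922 — 2 statements merged into one kernel-verified Lean document; each statement's English description precedes it below -/
import Mathlib

section
/- In a finite directed multigraph G with a designated vertex v, the number of spanning arborescences of G rooted at v (spanning trees obtained by choosing exactly one incoming arc for each non-root vertex, so that the tree is directed away from the root v) equals det(L̂_{v,v}), where L is the Laplacian matrix of G with L_{i,j} = −(number of arcs from i to j) for i ≠ j and L_{i,i} = (number of arcs entering i, excluding self-loops), and L̂_{v,v} is L with the row and column of v deleted. -/
open Matrix

section AuxDefs
variable {V E : Type*} [DecidableEq V]

/-- auxiliary row decomposition function for the matrix-tree theorem -/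
def gfun (src tgt : E → V) (v : V) (w : {w : V // w ≠ v}) (e : E) : {w : V // w ≠ v} → ℤ :=
  fun u => if tgt e = ↑w ∧ src e ≠ ↑w then
    (if w = u then 1 else 0) - (if src e = ↑u then 1 else 0)
  else 0

end AuxDefs

lemma card_eq_sum_ite {α : Type*} [Fintype α] (P : α → Prop) [DecidablePred P] :
    ((Nat.card {a : α // P a}) : ℤ) = ∑ a : α, if P a then 1 else 0 := by
  rw [Nat.card_eq_fintype_card, Fintype.card_subtype, Finset.card_filter]
  push_cast
  simp

lemma det_reach {V : Type*} [Fintype V] [DecidableEq V] (v : V) (p : V → V)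
    (hre : ∀ x, ∃ n, p^[n] x = v) :
    (Matrix.of fun (w u : {w : V // w ≠ v}) =>
      (if w = u then (1:ℤ) else 0) - (if p ↑w = ↑u then 1 else 0)).det = 1 := by
  classical
  set N := Matrix.of fun (w u : {w : V // w ≠ v}) =>
      (if w = u then (1:ℤ) else 0) - (if p ↑w = ↑u then 1 else 0) with hN
  let d : V → ℕ := fun x => Nat.find (hre x)
  have hd : ∀ x, p^[d x] x = v := fun x => Nat.find_spec (hre x)
  have hdlt : ∀ x, x ≠ v → d (p x) < d x := by
    intro x hx
    have h0 : d x ≠ 0 := by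
      intro h
      apply hx
      have := hd x
      rwa [h, Function.iterate_zero_apply] at this
    obtain ⟨n, hn⟩ := Nat.exists_eq_succ_of_ne_zero h0
    have hv : p^[n] (p x) = v := by
      have := hd x
      rwa [hn, Function.iterate_succ_apply] at this
    have : d (p x) ≤ n := Nat.find_le hv
    omega
  have hbt : Nᵀ.BlockTriangular (fun w => d ↑w) := by
    intro i j h
    simp only at h
    simp only [Matrix.transpose_apply, hN, Matrix.of_apply]
    have h1 : j ≠ i := by rintro rfl; exact lt_irrefl _ h
    have h2 : p ↑j ≠ ↑i := by
      intro he
      have := hdlt (↑j) j.2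
      rw [he] at this
      omega
    simp [h1, h2]
  have hblocks : ∀ k, (Nᵀ.toSquareBlock (fun w => d ↑w) k).det = 1 := by
    intro k
    have : (Nᵀ.toSquareBlock (fun w => d ↑w) k) = 1 := by
      ext a b
      simp only [Matrix.toSquareBlock_def, Matrix.transpose_apply, hN, Matrix.of_apply]
      have h2 : p ↑(↑b : {w : V // w ≠ v}) ≠ ↑(↑a : {w : V // w ≠ v}) := by
        intro he
        have hlt := hdlt (↑(↑b : {w : V // w ≠ v})) (↑b : {w : V // w ≠ v}).2
        rw [he] at hlt
        have ha := a.2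
        have hb := b.2
        omega
      rw [if_neg h2]
      by_cases hab : a = b
      · subst hab; simp [Matrix.one_apply]
      · have : (↑b : {w : V // w ≠ v}) ≠ ↑a := fun he => hab (Subtype.ext he.symm)
        simp [Matrix.one_apply, hab, this]
    rw [this, Matrix.det_one]
  rw [← Matrix.det_transpose, hbt.det]
  exact Finset.prod_eq_one fun k _ => hblocks k

lemma det_noreach {V : Type*} [Fintype V] [DecidableEq V] (v : V) (p : V → V)
    (x0 : V) (hx0 : ∀ n, p^[n] x0 ≠ v) :
    (Matrix.of fun (w u : {w : V // w ≠ v}) =>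
      (if w = u then (1:ℤ) else 0) - (if p ↑w = ↑u then 1 else 0)).det = 0 := by
  classical
  set N := Matrix.of fun (w u : {w : V // w ≠ v}) =>
      (if w = u then (1:ℤ) else 0) - (if p ↑w = ↑u then 1 else 0) with hN
  obtain ⟨a, b, hab, he⟩ := Finite.exists_ne_map_eq_of_infinite fun n : ℕ => p^[n] x0
  wlog hlt : a < b generalizing a b
  · exact this b a hab.symm he.symm (by omega)
  set x := p^[a] x0 with hx
  set q := b - a with hq
  have hq0 : 0 < q := by omega
  have hper : p^[q] x = x := by
    rw [hx, ← Function.iterate_add_apply]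
    have hqa : q + a = b := by omega
    rw [hqa]
    exact he.symm
  have hxiter : ∀ i, p^[i] x = p^[i + a] x0 := fun i => (Function.iterate_add_apply p i a x0).symm
  set C : Finset V := (Finset.range q).image fun i => p^[i] x with hC
  have hxC : x ∈ C := by
    rw [hC]
    exact Finset.mem_image.2 ⟨0, Finset.mem_range.2 hq0, rfl⟩
  have hCv : ∀ y ∈ C, y ≠ v := by
    intro y hy
    obtain ⟨i, _, rfl⟩ := Finset.mem_image.1 hy
    rw [hxiter]
    exact hx0 _
  have hCper : ∀ y ∈ C, p^[q] y = y := by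
    intro y hy
    obtain ⟨i, _, rfl⟩ := Finset.mem_image.1 hy
    rw [← Function.iterate_add_apply, Nat.add_comm, Function.iterate_add_apply, hper]
  have hCp : ∀ y ∈ C, p y ∈ C := by
    intro y hy
    obtain ⟨i, hi, rfl⟩ := Finset.mem_image.1 hy
    rw [Finset.mem_range] at hi
    have hh := Function.iterate_succ_apply' p i x
    rw [← hh]
    by_cases hiq : i + 1 < q
    · exact Finset.mem_image.2 ⟨i + 1, Finset.mem_range.2 hiq, rfl⟩
    · have hiq' : i.succ = q := by omega
      rw [hiq', hper]
      exact hxC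
  have hCiter : ∀ k, ∀ y ∈ C, p^[k] y ∈ C := by
    intro k
    induction k with
    | zero => intro y hy; simpa using hy
    | succ n ih =>
      intro y hy
      rw [Function.iterate_succ_apply']
      exact hCp _ (ih y hy)
  have hCinj : ∀ y ∈ C, ∀ z ∈ C, p y = p z → y = z := by
    intro y hy z hz hyz
    have h1 : p^[q-1] (p y) = y := by
      rw [← Function.iterate_succ_apply]
      have hsq : (q-1).succ = q := by omega
      rw [hsq]
      exact hCper y hy
    have h2 : p^[q-1] (p z) = z := by
      rw [← Function.iterate_succ_apply]
      have hsq : (q-1).succ = q := by omega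
      rw [hsq]
      exact hCper z hz
    rw [← h1, ← h2, hyz]
  have hCpre : ∀ u ∈ C, ∃ y ∈ C, p y = u := by
    intro u hu
    refine ⟨p^[q-1] u, hCiter _ u hu, ?_⟩
    have hh := Function.iterate_succ_apply' p (q-1) u
    rw [← hh]
    have hsq : (q-1).succ = q := by omega
    rw [hsq]
    exact hCper u hu
  set c : {w : V // w ≠ v} → ℤ := fun w => if ↑w ∈ C then 1 else 0 with hc
  have hvm : Nᵀ.mulVec c = 0 := by
    funext u
    simp only [Matrix.mulVec, dotProduct, Matrix.transpose_apply, hN, Matrix.of_apply,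
      Pi.zero_apply, hc]
    have hterm : ∀ w : {w : V // w ≠ v},
        ((if w = u then (1:ℤ) else 0) - (if p ↑w = ↑u then 1 else 0)) * (if ↑w ∈ C then 1 else 0)
        = (if w = u ∧ (↑u : V) ∈ C then 1 else 0) - (if p ↑w = ↑u ∧ (↑w : V) ∈ C then 1 else 0) := by
      intro w
      by_cases h1 : w = u <;> by_cases h2 : p ↑w = ↑u <;> by_cases h3 : (↑w : V) ∈ C <;>
        first
          | (subst h1; simp [h2, h3])
          | simp [h1, h2, h3]
    rw [Finset.sum_congr rfl fun w _ => hterm w, Finset.sum_sub_distrib]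
    have hs1 : (∑ w : {w : V // w ≠ v}, if w = u ∧ (↑u : V) ∈ C then (1:ℤ) else 0)
        = if (↑u : V) ∈ C then 1 else 0 := by
      by_cases hP : (↑u : V) ∈ C <;> simp [hP]
    have hs2 : (∑ w : {w : V // w ≠ v}, if p ↑w = ↑u ∧ (↑w : V) ∈ C then (1:ℤ) else 0)
        = if (↑u : V) ∈ C then 1 else 0 := by
      by_cases hu : (↑u : V) ∈ C
      · obtain ⟨y, hyC, hyu⟩ := hCpre ↑u hu
        have hyv := hCv y hyC
        have h0 : ∀ w ∈ Finset.univ, w ≠ (⟨y, hyv⟩ : {w : V // w ≠ v}) →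
            (if p ↑w = ↑u ∧ (↑w : V) ∈ C then (1:ℤ) else 0) = 0 := by
          intro w _ hw
          rw [if_neg]
          rintro ⟨h1', h2'⟩
          exact hw (Subtype.ext (hCinj ↑w h2' y hyC (h1'.trans hyu.symm)))
        rw [if_pos hu,
          Finset.sum_eq_single_of_mem _ (Finset.mem_univ (⟨y, hyv⟩ : {w : V // w ≠ v})) h0,
          if_pos ⟨hyu, hyC⟩]
      · rw [if_neg hu]
        refine Finset.sum_eq_zero fun w _ => ?_
        rw [if_neg]
        rintro ⟨h1, h2⟩
        exact hu (h1 ▸ hCp ↑w h2)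
    rw [hs1, hs2, sub_self]
  have h2 : (Nᵀ.adjugate * Nᵀ).mulVec c = 0 := by
    rw [← Matrix.mulVec_mulVec, hvm, Matrix.mulVec_zero]
  rw [Matrix.adjugate_mul] at h2
  have h3 := congrFun h2 ⟨x, hCv x hxC⟩
  rw [Matrix.smul_mulVec, Matrix.one_mulVec] at h3
  simp only [Pi.smul_apply, Pi.zero_apply, hc, hxC, if_pos, smul_eq_mul, mul_one] at h3
  rw [← Matrix.det_transpose]
  exact h3

/-- Matrix-tree theorem for directed multigraphs: the number of spanning arborescences
rooted at `v` (each non-root vertex chooses exactly one incoming arc, and following the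
chosen arcs backwards from any vertex eventually reaches the root `v`) equals the
determinant of the Laplacian (with in-degrees on the diagonal) with row and column `v`
removed. -/
theorem stmt_6 {V E : Type*} [Fintype V] [Fintype E] [DecidableEq V]
    (src tgt : E → V) (v : V) (L : Matrix V V ℤ)
    (hoff : ∀ i j, i ≠ j → L i j = -(Nat.card {e : E // src e = i ∧ tgt e = j} : ℤ))
    (hdiag : ∀ i, L i i = (Nat.card {e : E // tgt e = i ∧ src e ≠ i} : ℤ))
    (parent : ({w : V // w ≠ v} → E) → V → V)
    (hparent : ∀ f x, parent f x = if h : x = v then v else src (f ⟨x, h⟩)) :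
    (Nat.card {f : {w : V // w ≠ v} → E //
        (∀ w : {w : V // w ≠ v}, tgt (f w) = (w : V)) ∧
        (∀ x : V, ∃ n : ℕ, (parent f)^[n] x = v)} : ℤ)
      = (L.submatrix (Subtype.val : {w : V // w ≠ v} → V) Subtype.val).det := by
  classical
  have hdet : (L.submatrix (Subtype.val : {w : V // w ≠ v} → V) Subtype.val).det
      = ∑ r : {w : V // w ≠ v} → E,
          (Matrix.of fun w u => gfun src tgt v w (r w) u).det := by
    rw [← Matrix.det_transpose]
    have hrow : (L.submatrix (Subtype.val : {w : V // w ≠ v} → V) Subtype.val)ᵀ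
        = Matrix.of (fun w => ∑ e : E, gfun src tgt v w e) := by
      ext w u
      simp only [Matrix.transpose_apply, Matrix.submatrix_apply, Matrix.of_apply,
        Finset.sum_apply]
      by_cases huw : u = w
      · subst huw
        rw [hdiag, card_eq_sum_ite]
        refine Finset.sum_congr rfl fun e _ => ?_
        unfold gfun
        by_cases hcond : tgt e = ↑u ∧ src e ≠ ↑u
        · simp [hcond, hcond.2]
        · simp [hcond]
      · have hne : (↑u : V) ≠ ↑w := fun h => huw (Subtype.ext h)
        rw [hoff _ _ hne, card_eq_sum_ite, ← Finset.sum_neg_distrib]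
        refine Finset.sum_congr rfl fun e _ => ?_
        unfold gfun
        by_cases hsrc : src e = ↑u
        · by_cases htgt : tgt e = ↑w
          · have hsw : src e ≠ ↑w := by rw [hsrc]; exact hne
            simp [htgt, hsw, hsrc, huw, Ne.symm huw, hne]
          · simp [htgt, hsrc]
        · by_cases hcond : tgt e = ↑w ∧ src e ≠ ↑w
          · simp [hcond, hsrc, huw, Ne.symm huw]
          · simp [hcond, hsrc]
    rw [hrow]
    exact (Matrix.detRowAlternating :
      ({w : V // w ≠ v} → ℤ) [⋀^{w : V // w ≠ v}]→ₗ[ℤ] ℤ).toMultilinearMap.map_sum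
        (g := fun w e => gfun src tgt v w e)
  rw [hdet, card_eq_sum_ite]
  refine Finset.sum_congr rfl fun r _ => ?_
  by_cases hval : ∀ w : {w : V // w ≠ v}, tgt (r w) = ↑w ∧ src (r w) ≠ ↑w
  · have hA : (Matrix.of fun w u => gfun src tgt v w (r w) u)
        = Matrix.of fun (w u : {w : V // w ≠ v}) =>
            (if w = u then (1:ℤ) else 0) - (if parent r ↑w = ↑u then 1 else 0) := by
      ext w u
      unfold gfun
      simp only [Matrix.of_apply]
      rw [if_pos (hval w), hparent, dif_neg w.2]
    rw [hA]
    by_cases hre : ∀ x, ∃ n, (parent r)^[n] x = v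
    · rw [det_reach v (parent r) hre, if_pos ⟨fun w => (hval w).1, hre⟩]
    · push_neg at hre
      obtain ⟨x0, hx0⟩ := hre
      rw [det_noreach v (parent r) x0 hx0, if_neg]
      rintro ⟨-, h2⟩
      obtain ⟨n, hn⟩ := h2 x0
      exact hx0 n hn
  · push_neg at hval
    obtain ⟨w0, hw0⟩ := hval
    have hzero : (Matrix.of fun w u => gfun src tgt v w (r w) u).det = 0 := by
      apply Matrix.det_eq_zero_of_row_eq_zero w0
      intro u
      simp only [Matrix.of_apply]
      unfold gfun
      rw [if_neg]
      rintro ⟨h1, h2⟩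
      exact h2 (hw0 h1)
    rw [hzero, if_neg]
    rintro ⟨h1, h2⟩
    have hsrc : src (r w0) = ↑w0 := hw0 (h1 w0)
    have hfix : parent r ↑w0 = ↑w0 := by rw [hparent, dif_neg w0.2, hsrc]
    obtain ⟨n, hn⟩ := h2 ↑w0
    rw [Function.iterate_fixed hfix n] at hn
    exact w0.2 hn
end

section
/- Let P be a substochastic r×r matrix (nonnegative entries, row sums ≤ 1) such that from every index there is a positive-probability path (in the directed graph of positive entries, allowing exit via the deficiency 1 − row sum) reaching a state where the row sum is strictly less than 1. Then P^k converges to the zero matrix as k → ∞, and consequently every eigenvalue of P has modulus strictly less than 1. -/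
/-!
Write `u n = Pⁿ 𝟙` for the vector of row sums of `Pⁿ`. Since `P` is nonnegative and `P 𝟙 ≤ 𝟙`,
the sequence `u n` decreases, and a positive entry `P i j` carries a deficiency `u n j < 1` back
to `u (n + 1) i < 1`; following the path from `i` to a deficient row therefore makes `u n i < 1`
eventually, for every `i` at once. Then `Pᴺ` has row-sum norm `‖Pᴺ‖∞ < 1` for some `N ≥ 1`, so the
powers of `P` decay geometrically. For an eigenvalue `μ`, `μᵏ` lies in the spectrum of `Pᵏ`, hence
`|μ|ᵏ ≤ ‖Pᵏ‖ → 0` and `|μ| < 1`.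
-/

open Filter Topology Matrix

theorem norm_pow_add_mul_le {R : Type*} [SeminormedRing R] (a : R) (s N k : ℕ) :
    ‖a ^ (s + N * k)‖ ≤ ‖a ^ s‖ * ‖a ^ N‖ ^ k := by
  induction k with
  | zero => simp
  | succ k ih =>
    calc ‖a ^ (s + N * (k + 1))‖ = ‖a ^ (s + N * k) * a ^ N‖ := by rw [← pow_add]; ring_nf
      _ ≤ ‖a ^ (s + N * k)‖ * ‖a ^ N‖ := norm_mul_le _ _
      _ ≤ ‖a ^ s‖ * ‖a ^ N‖ ^ k * ‖a ^ N‖ := by gcongr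
      _ = ‖a ^ s‖ * ‖a ^ N‖ ^ (k + 1) := by ring

theorem tendsto_pow_atTop_nhds_zero_of_norm_pow_lt_one {R : Type*} [SeminormedRing R] {a : R}
    {N : ℕ} (hN : 0 < N) (ha : ‖a ^ N‖ < 1) : Tendsto (a ^ ·) atTop (𝓝 0) := by
  set C := ∑ s ∈ Finset.range N, ‖a ^ s‖
  have hbound : ∀ n, ‖a ^ n‖ ≤ C * ‖a ^ N‖ ^ (n / N) := fun n =>
    calc ‖a ^ n‖ = ‖a ^ (n % N + N * (n / N))‖ := by rw [Nat.mod_add_div]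
      _ ≤ ‖a ^ (n % N)‖ * ‖a ^ N‖ ^ (n / N) := norm_pow_add_mul_le a _ _ _
      _ ≤ C * ‖a ^ N‖ ^ (n / N) := by
        gcongr
        exact Finset.single_le_sum (fun s _ => norm_nonneg (a ^ s))
          (Finset.mem_range.2 (Nat.mod_lt n hN))
  refine squeeze_zero_norm hbound ?_
  simpa using ((tendsto_pow_atTop_nhds_zero_of_lt_one (norm_nonneg _) ha).comp
    (Nat.tendsto_div_const_atTop hN.ne')).const_mul C

theorem spectrum.norm_lt_one_of_tendsto_pow {𝕜 A : Type*} [NormedField 𝕜] [NormedRing A]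
    [NormedAlgebra 𝕜 A] [CompleteSpace A] {a : A} (ha : Tendsto (a ^ ·) atTop (𝓝 0)) {μ : 𝕜}
    (hμ : μ ∈ spectrum 𝕜 a) : ‖μ‖ < 1 := by
  have hpow : Tendsto (‖μ‖ ^ ·) atTop (𝓝 0) := by
    refine squeeze_zero (fun n => by positivity) (fun n => ?_)
      (by simpa using ha.norm.mul_const ‖(1 : A)‖)
    simpa using spectrum.norm_le_norm_mul_of_mem (spectrum.pow_mem_pow a n hμ)
  simpa using tendsto_pow_atTop_nhds_zero_iff.1 hpow

namespace Matrix

variable {ι R : Type*} [Fintype ι] [Semiring R] {A : Matrix ι ι R}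

theorem mulVec_one_apply_eq_sum (A : Matrix ι ι R) (i : ι) : (A *ᵥ 1) i = ∑ j, A i j := by
  simp [mulVec, dotProduct]

theorem pow_succ_mulVec [DecidableEq ι] (A : Matrix ι ι R) (n : ℕ) (v : ι → R) :
    A ^ (n + 1) *ᵥ v = A *ᵥ (A ^ n *ᵥ v) := by
  rw [pow_succ', mulVec_mulVec]

variable [PartialOrder R] [IsStrictOrderedRing R]

theorem mulVec_mono_of_nonneg (hA : ∀ i j, 0 ≤ A i j) {v w : ι → R} (hvw : v ≤ w) :
    A *ᵥ v ≤ A *ᵥ w :=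
  fun i => Finset.sum_le_sum fun j _ => mul_le_mul_of_nonneg_left (hvw j) (hA i j)

theorem mulVec_apply_lt_of_nonneg (hA : ∀ i j, 0 ≤ A i j) {v w : ι → R} (hvw : v ≤ w) {i j : ι}
    (hij : 0 < A i j) (hj : v j < w j) : (A *ᵥ v) i < (A *ᵥ w) i :=
  Finset.sum_lt_sum (fun k _ => mul_le_mul_of_nonneg_left (hvw k) (hA i k))
    ⟨j, Finset.mem_univ j, mul_lt_mul_of_pos_left hj hij⟩

section Substochastic

variable [DecidableEq ι] (hA : ∀ i j, 0 ≤ A i j) (hrow : A *ᵥ 1 ≤ 1)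
include hA hrow

theorem antitone_pow_mulVec_one : Antitone (A ^ · *ᵥ 1) := by
  refine antitone_nat_of_succ_le fun n => ?_
  induction n with
  | zero => simpa using hrow
  | succ n ih =>
    calc A ^ (n + 1 + 1) *ᵥ 1 = A *ᵥ (A ^ (n + 1) *ᵥ 1) := pow_succ_mulVec A (n + 1) 1
      _ ≤ A *ᵥ (A ^ n *ᵥ 1) := mulVec_mono_of_nonneg hA ih
      _ = A ^ (n + 1) *ᵥ 1 := (pow_succ_mulVec A n 1).symm

theorem pow_mulVec_one_le_one (n : ℕ) : A ^ n *ᵥ 1 ≤ 1 := by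
  simpa using antitone_pow_mulVec_one hA hrow (Nat.zero_le n)

theorem pow_mulVec_one_apply_lt_one_of_path {m : ℕ} {c : ℕ → ι}
    (hc : ∀ l < m, 0 < A (c l) (c (l + 1))) (hm : (A *ᵥ 1) (c m) < 1) :
    (A ^ (m + 1) *ᵥ 1) (c 0) < 1 := by
  induction m generalizing c with
  | zero => simpa using hm
  | succ m ih =>
    have htail : (A ^ (m + 1) *ᵥ 1) (c 1) < 1 :=
      ih (c := fun l => c (l + 1)) (fun l hl => hc (l + 1) (by omega)) hm
    rw [pow_succ_mulVec]
    calc (A *ᵥ (A ^ (m + 1) *ᵥ 1)) (c 0) < (A *ᵥ 1) (c 0) :=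
          mulVec_apply_lt_of_nonneg hA (pow_mulVec_one_le_one hA hrow _) (hc 0 (by omega)) htail
      _ ≤ 1 := hrow _

theorem exists_pow_mulVec_one_lt_one (hdef : ∀ i, ∃ n, (A ^ n *ᵥ 1) i < 1) :
    ∃ N, 0 < N ∧ ∀ i, (A ^ N *ᵥ 1) i < 1 := by
  have hev : ∀ i, ∀ᶠ n in atTop, (A ^ n *ᵥ 1) i < 1 := fun i => by
    obtain ⟨n, hn⟩ := hdef i
    exact eventually_atTop.2 ⟨n, fun k hk => (antitone_pow_mulVec_one hA hrow hk i).trans_lt hn⟩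
  exact ((eventually_gt_atTop 0).and (eventually_all.2 hev)).exists

end Substochastic

section LinftyOp

attribute [local instance] Matrix.linftyOpNormedAddCommGroup Matrix.linftyOpNormedRing
  Matrix.linftyOpNormedAlgebra

theorem linfty_opNorm_lt_one_of_nonneg {A : Matrix ι ι ℝ} (hA : ∀ i j, 0 ≤ A i j)
    (h : ∀ i, (A *ᵥ 1) i < 1) : ‖A‖ < 1 := by
  rw [linfty_opNorm_def, NNReal.coe_lt_one, Finset.sup_lt_iff zero_lt_one]
  intro i _
  rw [← NNReal.coe_lt_one]
  simpa [Real.norm_of_nonneg (hA i _), mulVec_one_apply_eq_sum] using h i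

theorem tendsto_pow_atTop_nhds_zero_of_substochastic [DecidableEq ι] {A : Matrix ι ι ℝ}
    (hA : ∀ i j, 0 ≤ A i j) (hrow : A *ᵥ 1 ≤ 1) (hdef : ∀ i, ∃ n, (A ^ n *ᵥ 1) i < 1) :
    Tendsto (A ^ ·) atTop (𝓝 0) := by
  obtain ⟨N, hN, hlt⟩ := exists_pow_mulVec_one_lt_one hA hrow hdef
  exact tendsto_pow_atTop_nhds_zero_of_norm_pow_lt_one hN
    (linfty_opNorm_lt_one_of_nonneg (pow_apply_nonneg hA N) hlt)

theorem norm_lt_one_of_mem_spectrum_of_tendsto_pow {𝕜 : Type*} [DecidableEq ι] [NormedField 𝕜]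
    [CompleteSpace 𝕜] {A : Matrix ι ι 𝕜} (hA : Tendsto (A ^ ·) atTop (𝓝 0)) {μ : 𝕜}
    (hμ : μ ∈ spectrum 𝕜 A) : ‖μ‖ < 1 :=
  -- `CompleteSpace (Matrix ι ι 𝕜)` is registered for the product uniformity, which is the
  -- `linftyOp` one only up to unfolding, so the instance has to be passed by hand.
  @spectrum.norm_lt_one_of_tendsto_pow _ _ _ _ _ (inferInstance : CompleteSpace (Matrix ι ι 𝕜))
    _ hA _ hμ

end LinftyOp

end Matrix

/-- A substochastic matrix from which every state can reach (via positive entries)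
a strictly deficient row has powers tending to zero, and all its complex eigenvalues
have modulus strictly less than one. -/
theorem stmt_9 {r : ℕ} (P : Matrix (Fin r) (Fin r) ℝ)
    (hnn : ∀ i j, 0 ≤ P i j) (hrow : ∀ i, ∑ j, P i j ≤ 1)
    (hacc : ∀ i, ∃ (m : ℕ) (c : ℕ → Fin r), c 0 = i ∧
        (∀ l < m, 0 < P (c l) (c (l + 1))) ∧ ∑ j, P (c m) j < 1) :
    Filter.Tendsto (fun k => P ^ k) Filter.atTop (nhds 0) ∧
      ∀ μ ∈ spectrum ℂ (P.map Complex.ofReal), ‖μ‖ < 1 := by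
  have hsub : P *ᵥ 1 ≤ 1 := fun i => by simpa [mulVec_one_apply_eq_sum] using hrow i
  have hP : Tendsto (P ^ ·) atTop (𝓝 0) :=
    tendsto_pow_atTop_nhds_zero_of_substochastic hnn hsub fun i => by
      obtain ⟨m, c, rfl, hc, hm⟩ := hacc i
      exact ⟨m + 1, pow_mulVec_one_apply_lt_one_of_path hnn hsub hc
        (by rwa [mulVec_one_apply_eq_sum])⟩
  refine ⟨hP, fun μ hμ => norm_lt_one_of_mem_spectrum_of_tendsto_pow ?_ hμ⟩
  have hmap (k : ℕ) : P.map Complex.ofReal ^ k = (P ^ k).map Complex.ofReal :=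
    (map_pow Complex.ofRealHom.mapMatrix P k).symm
  simp only [hmap]
  exact ((continuous_id.matrix_map Complex.continuous_ofReal).tendsto 0).comp hP
end
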